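/- Fix a real c and define, for X ≥ 0, λ(X) = ((1+X)·e^{−arctan X}/√(1+X²)) · ( 2c − ∫₀^X 2e^{arctan x}/((1+x)√(1+x²)) dx ). Then λ(0) = 2c and for every X ≥ 0, λ is differentiable at X with λ′(X) = −2/(1+X²) − (2X/((1+X)(1+X²)))·λ(X). -/

import Mathlib

/-- `λ(X) = ((1+X)e^{-arctan X}/√(1+X²)) (2c - ∫₀^X 2e^{arctan x}/((1+x)√(1+x²)) dx)`. -/
noncomputable def lamFun (c : ℝ) (X : ℝ) : ℝ :=
  ((1 + X) * Real.exp (-Real.arctan X) / Real.sqrt (1 + X ^ 2)) *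
    (2 * c - ∫ x in (0 : ℝ)..X,
      2 * Real.exp (Real.arctan x) / ((1 + x) * Real.sqrt (1 + x ^ 2)))

/-- `λ(0) = 2c`, and for every `X ≥ 0`, `λ` is differentiable at `X` with
`λ′(X) = -2/(1+X²) - (2X/((1+X)(1+X²))) λ(X)`. -/
theorem lamFun_ode (c : ℝ) :
    lamFun c 0 = 2 * c ∧
      ∀ X : ℝ, 0 ≤ X →
        HasDerivAt (lamFun c)
          (-2 / (1 + X ^ 2) - (2 * X / ((1 + X) * (1 + X ^ 2))) * lamFun c X) X := by
  constructor
  · simp [lamFun]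
  · intro X hX
    set f : ℝ → ℝ := fun x => 2 * Real.exp (Real.arctan x) / ((1 + x) * Real.sqrt (1 + x ^ 2))
      with hf
    have h1X : (0:ℝ) < 1 + X := by linarith
    have h1X2 : (0:ℝ) < 1 + X ^ 2 := by positivity
    have hs : (0:ℝ) < Real.sqrt (1 + X ^ 2) := Real.sqrt_pos.2 h1X2
    -- derivative of the prefactor g
    have hu : HasDerivAt (fun X : ℝ => 1 + X) 1 X := (hasDerivAt_id X).const_add 1
    have ha : HasDerivAt Real.arctan (1 / (1 + X ^ 2)) X := Real.hasDerivAt_arctan X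
    have he : HasDerivAt (fun X : ℝ => Real.exp (-Real.arctan X))
        (Real.exp (-Real.arctan X) * (-(1 / (1 + X ^ 2)))) X := ha.neg.exp
    have hq : HasDerivAt (fun X : ℝ => 1 + X ^ 2) ((2 : ℕ) * X ^ 1) X :=
      (hasDerivAt_pow 2 X).const_add 1
    have hw : HasDerivAt (fun X : ℝ => Real.sqrt (1 + X ^ 2))
        (((2 : ℕ) * X ^ 1) / (2 * Real.sqrt (1 + X ^ 2))) X := hq.sqrt h1X2.ne'
    have hg : HasDerivAt (fun X : ℝ => (1 + X) * Real.exp (-Real.arctan X) / Real.sqrt (1 + X ^ 2))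
        (((1 * Real.exp (-Real.arctan X) +
            (1 + X) * (Real.exp (-Real.arctan X) * (-(1 / (1 + X ^ 2))))) *
              Real.sqrt (1 + X ^ 2) -
            (1 + X) * Real.exp (-Real.arctan X) * (((2 : ℕ) * X ^ 1) / (2 * Real.sqrt (1 + X ^ 2)))) /
          Real.sqrt (1 + X ^ 2) ^ 2) X := (hu.mul he).div hw hs.ne'
    -- derivative of the integral
    have hcont : ∀ x : ℝ, -1 < x → ContinuousAt f x := by
      intro x hx
      have h1 : (0:ℝ) < 1 + x := by linarith
      have h2 : (0:ℝ) < 1 + x ^ 2 := by positivity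
      apply ContinuousAt.div
      · exact (Real.continuous_exp.comp Real.continuous_arctan).continuousAt.const_mul 2
      · exact ((continuous_const.add continuous_id).continuousAt).mul
          ((Real.continuous_sqrt.comp (continuous_const.add (continuous_pow 2))).continuousAt)
      · have : (0:ℝ) < Real.sqrt (1 + x ^ 2) := Real.sqrt_pos.2 h2
        positivity
    have hint : IntervalIntegrable f MeasureTheory.volume 0 X := by
      apply ContinuousOn.intervalIntegrable
      intro x hx
      rw [Set.uIcc_of_le hX] at hx
      exact (hcont x (by linarith [hx.1])).continuousWithinAt
    have hmeas : StronglyMeasurableAtFilter f (nhds X) := by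
      refine ⟨Set.Ioi (-1 : ℝ), Ioi_mem_nhds (by linarith), ?_⟩
      apply ContinuousOn.aestronglyMeasurable
      · exact fun x hx => (hcont x hx).continuousWithinAt
      · exact measurableSet_Ioi
    have hF : HasDerivAt (fun X : ℝ => ∫ x in (0:ℝ)..X, f x) (f X) X :=
      intervalIntegral.integral_hasDerivAt_right hint hmeas (hcont X (by linarith))
    have h2 : HasDerivAt (fun X : ℝ => 2 * c - ∫ x in (0:ℝ)..X, f x) (-(f X)) X :=
      hF.const_sub (2 * c)
    have hlam := hg.mul h2
    have key : lamFun c = fun X : ℝ =>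
        ((1 + X) * Real.exp (-Real.arctan X) / Real.sqrt (1 + X ^ 2)) *
          (2 * c - ∫ x in (0:ℝ)..X, f x) := rfl
    rw [key]
    have hs2 : Real.sqrt (1 + X ^ 2) ^ 2 = 1 + X ^ 2 := Real.sq_sqrt h1X2.le
    have hexp : Real.exp (-Real.arctan X) * Real.exp (Real.arctan X) = 1 := by
      rw [← Real.exp_add]; simp
    set s := Real.sqrt (1 + X ^ 2) with hsdef
    set a := Real.exp (-Real.arctan X) with hadef
    set b := Real.exp (Real.arctan X) with hbdef
    have hgval : ((1 * a + (1 + X) * (a * -(1 / (1 + X ^ 2)))) * s -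
        (1 + X) * a * (((2:ℕ) : ℝ) * X ^ 1 / (2 * s))) / s ^ 2 =
        -(2 * X) / ((1 + X) * (1 + X ^ 2)) * ((1 + X) * a / s) := by
      field_simp
      linear_combination (2*a*X + 2*a*X^2) * hs2
    have hprod : ((1 + X) * a / s) * f X = 2 / (1 + X ^ 2) := by
      simp only [hf, ← hsdef, ← hbdef]
      field_simp
      linear_combination (1+X^2)*hexp - hs2
    refine hlam.congr_deriv ?_
    rw [hgval]
    linear_combination -hprod
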